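/- Let α, σ², W > 0, let R̄ > 0 be a target average data rate, and let ξ > 0. Then ∫_0^∞ W·log₂(1 + (α g/σ²)·max(ξ − σ²/(α g), 0))·e^{−g} dg = R̄ holds if and only if E₁(σ²/(α ξ)) = (R̄·ln 2)/W; equivalently, if and only if ξ = (σ²/α)·x^{−1}, where x is the unique positive solution of E₁(x) = (R̄·ln 2)/W. (Corollary 1 of the paper.) -/

import Mathlib

/-!
For `g > 0` the water-filling SNR `1 + (α g/σ²)·max(ξ − σ²/(α g), 0)` equals `max (g/a) 1` with
`a = σ²/(α ξ)`, so the rate integral is `(W/ln 2)·∫_a^∞ log(g/a) e^{−g} dg`. Integrating by parts,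
with `log(g/a)` vanishing at `g = a`, turns this into `(W/ln 2)·E₁(a)`. The second equivalence
follows because `E₁` is strictly decreasing, hence injective, on `(0, ∞)`.
-/

open MeasureTheory Set

/-- The exponential integral function `E₁(x) = ∫_x^∞ e^{−t}/t dt`. -/
noncomputable def expIntegralE1 (x : ℝ) : ℝ := ∫ t in Ioi x, Real.exp (-t) / t

open Real Filter Topology

lemma integrableOn_exp_neg_div_Ioi {x : ℝ} (hx : 0 < x) :
    IntegrableOn (fun t => exp (-t) / t) (Ioi x) := by
  refine ((exp_neg_integrableOn_Ioi x one_pos).const_mul x⁻¹).mono'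
    (by fun_prop : Measurable fun t => exp (-t) / t).aestronglyMeasurable ?_
  filter_upwards [ae_restrict_mem measurableSet_Ioi] with t (ht : x < t)
  rw [norm_of_nonneg (by have := hx.trans ht; positivity), neg_one_mul, inv_mul_eq_div]
  gcongr

lemma abs_log_div_mul_exp_neg_le {a g : ℝ} (ha : 0 < a) (hag : a ≤ g) :
    |log (g / a) * exp (-g)| ≤ a⁻¹ * (g * exp (-g)) := by
  have hlog : 0 ≤ log (g / a) := log_nonneg ((one_le_div ha).2 hag)
  rw [abs_of_nonneg (by positivity), ← mul_assoc, inv_mul_eq_div]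
  gcongr
  exact log_le_self (div_nonneg (ha.le.trans hag) ha.le)

lemma integrableOn_log_div_mul_exp_neg_Ioi {a : ℝ} (ha : 0 < a) :
    IntegrableOn (fun g => log (g / a) * exp (-g)) (Ioi a) := by
  have hdom : IntegrableOn (fun g => a⁻¹ * (g * exp (-g))) (Ioi a) := by
    have hgamma := (GammaIntegral_convergent two_pos).mono_set (Ioi_subset_Ioi ha.le)
    norm_num [mul_comm] at hgamma
    exact hgamma.const_mul _
  refine hdom.mono' (by fun_prop) ?_
  filter_upwards [ae_restrict_mem measurableSet_Ioi] with g (hg : a < g)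
  exact abs_log_div_mul_exp_neg_le ha hg.le

theorem integral_Ioi_log_div_mul_exp_neg {a : ℝ} (ha : 0 < a) :
    ∫ g in Ioi a, log (g / a) * exp (-g) = expIntegralE1 a := by
  have hderiv : ∀ g ∈ Ici a, HasDerivAt (fun g => -(exp (-g) * log (g / a)))
      (log (g / a) * exp (-g) - exp (-g) / g) g := by
    intro g (hg : a ≤ g)
    have hg0 : g ≠ 0 := (ha.trans_le hg).ne'
    refine (((hasDerivAt_neg g).exp).mul
      (((hasDerivAt_id' g).div_const a).log (div_ne_zero hg0 ha.ne'))).neg.congr_deriv ?_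
    field_simp
    ring
  have hlim : Tendsto (fun g => -(exp (-g) * log (g / a))) atTop (𝓝 0) := by
    refine squeeze_zero_norm' ?_
      (by simpa using (tendsto_pow_mul_exp_neg_atTop_nhds_zero 1).const_mul a⁻¹)
    filter_upwards [eventually_ge_atTop a] with g hg
    rw [norm_neg, mul_comm, norm_eq_abs]
    simpa using abs_log_div_mul_exp_neg_le ha hg
  have hFTC := integral_Ioi_of_hasDerivAt_of_tendsto' hderiv
    ((integrableOn_log_div_mul_exp_neg_Ioi ha).sub (integrableOn_exp_neg_div_Ioi ha)) hlim
  rw [integral_sub (integrableOn_log_div_mul_exp_neg_Ioi ha) (integrableOn_exp_neg_div_Ioi ha)]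
    at hFTC
  simp only [div_self ha.ne', log_one, mul_zero, neg_zero, sub_self] at hFTC
  rw [expIntegralE1]
  linarith

theorem expIntegralE1_strictAntiOn : StrictAntiOn expIntegralE1 (Ioi 0) := by
  intro x (hx : 0 < x) y (hy : 0 < y) hxy
  have hsplit := intervalIntegral.integral_interval_add_Ioi (integrableOn_exp_neg_div_Ioi hx)
    (integrableOn_exp_neg_div_Ioi hy)
  have hpos : 0 < ∫ t in x..y, exp (-t) / t :=
    intervalIntegral.intervalIntegral_pos_of_pos_on
      ((intervalIntegrable_iff_integrableOn_Ioc_of_le hxy.le).2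
        ((integrableOn_exp_neg_div_Ioi hx).mono_set Ioc_subset_Ioi_self))
      (fun t ht => by have := hx.trans ht.1; positivity) hxy
  rw [expIntegralE1, expIntegralE1]
  linarith

lemma one_add_mul_max_sub_div_eq_max {α σ2 ξ g : ℝ} (hα : 0 < α) (hσ2 : 0 < σ2) (hg : 0 < g) :
    1 + (α * g / σ2) * max (ξ - σ2 / (α * g)) 0 = max (g / (σ2 / (α * ξ))) 1 := by
  rw [mul_max_of_nonneg _ _ (by positivity), mul_zero, ← max_add_add_left, add_zero]
  congr 1
  field_simp
  ring

theorem integral_rayleigh_waterfilling_rate {α σ2 ξ : ℝ} (W : ℝ) (hα : 0 < α) (hσ2 : 0 < σ2)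
    (hξ : 0 < ξ) :
    ∫ g in Ioi (0 : ℝ),
        W * logb 2 (1 + (α * g / σ2) * max (ξ - σ2 / (α * g)) 0) * exp (-g)
      = W / log 2 * expIntegralE1 (σ2 / (α * ξ)) := by
  set a := σ2 / (α * ξ)
  have ha : 0 < a := by positivity
  have hintegrand : ∀ g ∈ Ioi (0 : ℝ),
      W * logb 2 (1 + (α * g / σ2) * max (ξ - σ2 / (α * g)) 0) * exp (-g)
        = (Ioi a).indicator (fun g => W / log 2 * (log (g / a) * exp (-g))) g := by
    intro g (hg : 0 < g)
    rw [one_add_mul_max_sub_div_eq_max hα hσ2 hg, logb]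
    by_cases hga : a < g
    · rw [indicator_of_mem (show g ∈ Ioi a from hga), max_eq_left ((one_le_div ha).2 hga.le)]
      ring
    · rw [indicator_of_notMem (show g ∉ Ioi a from hga),
        max_eq_right ((div_le_one ha).2 (not_lt.1 hga)), log_one]
      ring
  rw [setIntegral_congr_fun measurableSet_Ioi hintegrand, setIntegral_indicator measurableSet_Ioi,
    Ioi_inter_Ioi, max_eq_right ha.le, integral_const_mul, integral_Ioi_log_div_mul_exp_neg ha]

theorem rayleigh_waterfilling_rate_eq_iff_general (α σ2 W Rbar ξ : ℝ)
    (hα : 0 < α) (hσ2 : 0 < σ2) (hW : 0 < W) (hξ : 0 < ξ) :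
    ((∫ g in Ioi (0 : ℝ),
        W * Real.logb 2 (1 + (α * g / σ2) * max (ξ - σ2 / (α * g)) 0) * Real.exp (-g)
          = Rbar)
      ↔ expIntegralE1 (σ2 / (α * ξ)) = Rbar * Real.log 2 / W) ∧
    (∀ x : ℝ, 0 < x → expIntegralE1 x = Rbar * Real.log 2 / W →
      ((∫ g in Ioi (0 : ℝ),
          W * Real.logb 2 (1 + (α * g / σ2) * max (ξ - σ2 / (α * g)) 0) * Real.exp (-g)
            = Rbar)
        ↔ ξ = (σ2 / α) * x⁻¹)) := by
  have hrate_iff : (∫ g in Ioi (0 : ℝ),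
        W * logb 2 (1 + (α * g / σ2) * max (ξ - σ2 / (α * g)) 0) * exp (-g) = Rbar)
      ↔ expIntegralE1 (σ2 / (α * ξ)) = Rbar * log 2 / W := by
    rw [integral_rayleigh_waterfilling_rate W hα hσ2 hξ, eq_div_iff hW.ne', div_mul_eq_mul_div,
      div_eq_iff (log_pos one_lt_two).ne', mul_comm W]
  refine ⟨hrate_iff, fun x hx hxE => ?_⟩
  have ha : 0 < σ2 / (α * ξ) := by positivity
  rw [hrate_iff, ← hxE, expIntegralE1_strictAntiOn.injOn.eq_iff ha hx]
  constructor <;> rintro rfl <;> field_simp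

/-- **Corollary 1 of the paper.** Under Rayleigh fading, the uncapped water-filling policy
with water level `ξ > 0` achieves the target average rate `R̄` if and only if
`E₁(σ²/(α ξ)) = R̄·ln 2/W`; equivalently, if and only if `ξ = (σ²/α)·x⁻¹` where `x` is the
unique positive solution of `E₁(x) = R̄·ln 2/W`. -/
theorem rayleigh_waterfilling_rate_eq_iff (α σ2 W Rbar ξ : ℝ)
    (hα : 0 < α) (hσ2 : 0 < σ2) (hW : 0 < W) (hR : 0 < Rbar) (hξ : 0 < ξ) :
    ((∫ g in Ioi (0 : ℝ),
        W * Real.logb 2 (1 + (α * g / σ2) * max (ξ - σ2 / (α * g)) 0) * Real.exp (-g)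
          = Rbar)
      ↔ expIntegralE1 (σ2 / (α * ξ)) = Rbar * Real.log 2 / W) ∧
    (∀ x : ℝ, 0 < x → expIntegralE1 x = Rbar * Real.log 2 / W →
      ((∫ g in Ioi (0 : ℝ),
          W * Real.logb 2 (1 + (α * g / σ2) * max (ξ - σ2 / (α * g)) 0) * Real.exp (-g)
            = Rbar)
        ↔ ξ = (σ2 / α) * x⁻¹)) :=
  rayleigh_waterfilling_rate_eq_iff_general α σ2 W Rbar ξ hα hσ2 hW hξ
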